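/- arXiv:math/0203087 — 2 statements merged into one kernel-verified Lean document; each statement's English description precedes it below -/
import Mathlib

section
/- Let M be a closed oriented 4-manifold that is a d-fold simple branched cover of S⁴ with locally flat branching surface F. Then F has at least d + |σ(M)|/2 − χ(M)/2 connected components, where σ(M) is the signature of M. -/
/-! Summing the Whitney–Massey bounds over the components gives
`|F·F| ≤ 4k − 2χ(F)`; substituting `F·F = −2σ(M)` and `χ(F) = 2d − χ(M)`
turns this into `2|σ(M)| ≤ 4k − 4d + 2χ(M)`. -/

theorem Finset.abs_sum_le_four_mul_card_sub_two_mul_sum {ι R : Type*}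
    [Ring R] [LinearOrder R] [IsOrderedRing R] (s : Finset ι) (χ e : ι → R)
    (h : ∀ i ∈ s, |e i| ≤ 4 - 2 * χ i) :
    |∑ i ∈ s, e i| ≤ 4 * s.card - 2 * ∑ i ∈ s, χ i :=
  calc |∑ i ∈ s, e i| ≤ ∑ i ∈ s, |e i| := s.abs_sum_le_sum_abs e
    _ ≤ ∑ i ∈ s, (4 - 2 * χ i) := Finset.sum_le_sum h
    _ = 4 * s.card - 2 * ∑ i ∈ s, χ i := by
      rw [Finset.sum_sub_distrib, Finset.sum_const, nsmul_eq_mul, Finset.mul_sum,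
        Nat.cast_comm]

theorem components_lower_bound_general
    (d k : ℕ) (χM σM : ℤ)
    (χ e : Fin k → ℤ)
    (hχF : (∑ i, χ i) = 2 * (d : ℤ) - χM)
    (hFF : (∑ i, e i) = -2 * σM)
    (hWhitney : ∀ i, |e i| ≤ 4 - 2 * χ i) :
    (k : ℚ) ≥ (d : ℚ) + |(σM : ℚ)| / 2 - (χM : ℚ) / 2 := by
  have hbound := Finset.univ.abs_sum_le_four_mul_card_sub_two_mul_sum χ e
    fun i _ => hWhitney i
  rw [hFF, hχF, abs_mul, Finset.card_univ, Fintype.card_fin] at hbound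
  have hσ : |σM| ≤ 2 * k - 2 * d + χM := by norm_num at hbound; linarith
  have hσℚ : |(σM : ℚ)| ≤ 2 * k - 2 * d + χM := by exact_mod_cast hσ
  linarith

/-- Let `M` be a closed oriented 4-manifold which is a simple `d`-fold branched
cover of `S⁴` with locally flat branching surface `F` having `k` connected
components, with Euler characteristics `χ i` and normal Euler numbers
(self-intersections) `e i`.  Using `χ(F) = 2d − χ(M)` (Riemann–Hurwitz),
`F·F = −2σ(M)` (Viro), and the Whitney–Massey inequality
`|S_i·S_i| ≤ 4 − 2χ(S_i)` for each component, the number of components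
satisfies `k ≥ d + |σ(M)|/2 − χ(M)/2`. -/
theorem components_lower_bound
    (d k : ℕ) (hd : 1 ≤ d) (χM σM : ℤ)
    (χ e : Fin k → ℤ)
    (hχF : (∑ i, χ i) = 2 * (d : ℤ) - χM)
    (hFF : (∑ i, e i) = -2 * σM)
    (hWhitney : ∀ i, |e i| ≤ 4 - 2 * χ i) :
    (k : ℚ) ≥ (d : ℚ) + |(σM : ℚ)| / 2 - (χM : ℚ) / 2 :=
  components_lower_bound_general d k χM σM χ e hχF hFF hWhitney
end

section
/- Attaching a 2-handle that cancels a 1-handle leaves the manifold unchanged: if W' is obtained from W × [0,1] by attaching a 1-handle H and then a 2-handle L whose attaching circle runs geometrically once over H, then W' is homotopy equivalent (indeed PL homeomorphic) to W × [0,1]. -/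
open unitInterval

/-- The space obtained from `W` by attaching a 1-cell with endpoints `a, b ∈ W`:
the quotient of `W ⊕ [0,1]` gluing `0 ↦ a` and `1 ↦ b`. -/
def AttachOneCell (W : Type) [TopologicalSpace W] (a b : W) : Type :=
  Quot (fun x y : W ⊕ unitInterval =>
    (x = Sum.inr 0 ∧ y = Sum.inl a) ∨ (x = Sum.inr 1 ∧ y = Sum.inl b))

instance (W : Type) [TopologicalSpace W] (a b : W) :
    TopologicalSpace (AttachOneCell W a b) :=
  instTopologicalSpaceQuot

/-- The canonical (continuous) inclusion `W → W ∪ (1-cell)`. -/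
def inclOneCell (W : Type) [TopologicalSpace W] (a b : W) :
    C(W, AttachOneCell W a b) :=
  ⟨fun w => Quot.mk _ (Sum.inl w), continuous_quot_mk.comp continuous_inl⟩

/-- The core of the attached 1-cell, as a path in `W ∪ (1-cell)` from `a` to `b`. -/
def oneCellPath (W : Type) [TopologicalSpace W] (a b : W) :
    Path (inclOneCell W a b a) (inclOneCell W a b b) where
  toFun t := Quot.mk _ (Sum.inr t)
  continuous_toFun := continuous_quot_mk.comp continuous_inr
  source' := Quot.sound (Or.inl ⟨rfl, rfl⟩)
  target' := Quot.sound (Or.inr ⟨rfl, rfl⟩)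

/-- The space obtained from `X` by attaching a 2-cell along the loop `ℓ` based
at `x`: the quotient of `X ⊕ ([0,1] × [0,1])` gluing the bottom edge of the
square along `ℓ` and the other three edges to the basepoint `x`. -/
def AttachTwoCell (X : Type) [TopologicalSpace X] (x : X) (ℓ : Path x x) : Type :=
  Quot (fun u v : X ⊕ (unitInterval × unitInterval) =>
    ∃ p : unitInterval × unitInterval, u = Sum.inr p ∧
      ((p.2 = 0 ∧ v = Sum.inl (ℓ p.1)) ∨
        ((p.2 = 1 ∨ p.1 = 0 ∨ p.1 = 1) ∧ v = Sum.inl x)))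

instance (X : Type) [TopologicalSpace X] (x : X) (ℓ : Path x x) :
    TopologicalSpace (AttachTwoCell X x ℓ) :=
  instTopologicalSpaceQuot

/-!
The square of the 2-cell collapses onto its three edges that go to the basepoint together with
the right half of its bottom edge, which is glued along `η`: slide every point along the U-shaped
level set of `max |2s - 1| u` through it, towards the right foot of that U. The left half of the
bottom edge is a free face of the square, and the 1-cell is glued to nothing else, so the collapse
extends over the 1-cell and deforms the whole complex into `W`. The resulting retraction sends the
U of level `m` to `η m`.
-/

open ContinuousMap

namespace unitInterval

noncomputable def lowerHalf (u : I) : I := ⟨u / 2, by constructor <;> linarith [u.2.1, u.2.2]⟩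

noncomputable def upperHalf (u : I) : I :=
  ⟨(u + 1) / 2, by constructor <;> linarith [u.2.1, u.2.2]⟩

theorem lowerHalf_one : lowerHalf 1 = upperHalf 0 :=
  Subtype.ext (by norm_num [lowerHalf, upperHalf])

@[fun_prop]
theorem continuous_lowerHalf : Continuous lowerHalf :=
  (continuous_subtype_val.div_const 2).subtype_mk _

theorem exists_eq_lowerHalf_or_upperHalf (s : I) :
    (∃ u, s = lowerHalf u) ∨ ∃ u, s = upperHalf u := by
  rcases le_total (s : ℝ) (1 / 2) with h | h
  · exact .inl ⟨⟨2 * s, by constructor <;> linarith [s.2.1]⟩,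
      Subtype.ext (by simp [lowerHalf])⟩
  · exact .inr ⟨⟨2 * s - 1, by constructor <;> linarith [s.2.2]⟩,
      Subtype.ext (by simp [upperHalf])⟩

end unitInterval

namespace Path

variable {X : Type*} [TopologicalSpace X] {x y z : X}

@[simp]
theorem trans_lowerHalf (γ : Path x y) (γ' : Path y z) (u : I) :
    γ.trans γ' (lowerHalf u) = γ u := by
  rw [trans_apply, dif_pos (by simp [lowerHalf]; linarith [u.2.2])]
  congr 1
  exact Subtype.ext (by simp [lowerHalf]; ring)

@[simp]
theorem trans_upperHalf (γ : Path x y) (γ' : Path y z) (u : I) :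
    γ.trans γ' (upperHalf u) = γ' u := by
  by_cases hu : (u : ℝ) = 0
  · rw [show u = 0 from Subtype.ext hu, ← lowerHalf_one, trans_lowerHalf, γ.target, γ'.source]
  have hu₀ : 0 < (u : ℝ) := lt_of_le_of_ne u.2.1 (Ne.symm hu)
  rw [trans_apply, dif_neg (by change ¬ ((u : ℝ) + 1) / 2 ≤ 1 / 2; linarith)]
  congr 1
  exact Subtype.ext (by simp [upperHalf]; ring)

end Path

namespace ContinuousMap.Homotopy

variable {X Y : Type*} [TopologicalSpace X] [TopologicalSpace Y] {f₀ f₁ : C(X, Y)}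

def ofTracks (H : C(X, C(I, Y))) (h₀ : ∀ x, H x 0 = f₀ x) (h₁ : ∀ x, H x 1 = f₁ x) :
    Homotopy f₀ f₁ where
  toContinuousMap := H.uncurry.comp prodSwap
  map_zero_left := h₀
  map_one_left := h₁

end ContinuousMap.Homotopy

namespace AttachOneCell

variable {W : Type} [TopologicalSpace W] {a b : W} {Z : Type*} [TopologicalSpace Z]

@[elab_as_elim]
theorem induction_on {P : AttachOneCell W a b → Prop} (y : AttachOneCell W a b)
    (incl : ∀ w, P (inclOneCell W a b w)) (cell : ∀ t, P (oneCellPath W a b t)) : P y :=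
  Quot.ind (Sum.rec incl cell) y

def lift (f : C(W, Z)) (γ : Path (f a) (f b)) : C(AttachOneCell W a b, Z) where
  toFun := Quot.lift (Sum.elim f γ) <| by rintro _ _ (⟨rfl, rfl⟩ | ⟨rfl, rfl⟩) <;> simp
  continuous_toFun := continuous_quot_lift _ (f.continuous.sumElim γ.continuous)

end AttachOneCell

namespace AttachTwoCell

variable {X : Type} [TopologicalSpace X] {x : X} {ℓ : Path x x} {Z : Type*} [TopologicalSpace Z]

def collapsedEdges : Set (I × I) := {p | p.2 = 1 ∨ p.1 = 0 ∨ p.1 = 1}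

variable (X x ℓ) in
def incl : C(X, AttachTwoCell X x ℓ) :=
  ⟨fun y => Quot.mk _ (.inl y), continuous_quot_mk.comp continuous_inl⟩

variable (X x ℓ) in
def cell : C(I × I, AttachTwoCell X x ℓ) :=
  ⟨fun p => Quot.mk _ (.inr p), continuous_quot_mk.comp continuous_inr⟩

theorem cell_bottom (s : I) : cell X x ℓ (s, 0) = incl X x ℓ (ℓ s) :=
  Quot.sound ⟨_, rfl, .inl ⟨rfl, rfl⟩⟩

theorem cell_of_mem_collapsedEdges {p : I × I} (hp : p ∈ collapsedEdges) :
    cell X x ℓ p = incl X x ℓ x :=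
  Quot.sound ⟨p, rfl, .inr ⟨hp, rfl⟩⟩

@[elab_as_elim]
theorem induction_on {P : AttachTwoCell X x ℓ → Prop} (y : AttachTwoCell X x ℓ)
    (incl : ∀ y, P (incl X x ℓ y)) (cell : ∀ p, P (cell X x ℓ p)) : P y :=
  Quot.ind (Sum.rec incl cell) y

def lift (f : C(X, Z)) (g : C(I × I, Z)) (bottom : ∀ s, g (s, 0) = f (ℓ s))
    (edges : ∀ p ∈ collapsedEdges, g p = f x) : C(AttachTwoCell X x ℓ, Z) where
  toFun := Quot.lift (Sum.elim f g) <| by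
    rintro _ _ ⟨p, rfl, ⟨hp, rfl⟩ | ⟨hp, rfl⟩⟩
    · obtain ⟨s, u⟩ := p
      obtain rfl : u = 0 := hp
      exact bottom s
    · exact edges p hp
  continuous_toFun := continuous_quot_lift _ (f.continuous.sumElim g.continuous)

end AttachTwoCell

/-! On the upper half-plane the level sets of `UShape.level` are the U-shaped curves
`{|x| = m, 0 ≤ y ≤ m} ∪ {|x| ≤ m, y = m}`. `UShape.point m` runs along the U of level `m`
from its left foot (`r = -2m`) to its right foot (`r = 2m`), and `UShape.param` inverts it. -/
namespace UShape

def level (x y : ℝ) : ℝ := max |x| y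

def param (x y : ℝ) : ℝ := min (2 * x + y) (max (2 * x - y) x)

def point (m r : ℝ) : ℝ × ℝ := (max (-m) (min m r), min m (2 * m - |r|))

def flow (t x y : ℝ) : ℝ × ℝ := point (level x y) ((1 - t) * param x y + t * (2 * level x y))

variable {t x y m r : ℝ}

theorem level_nonneg (hy : 0 ≤ y) : 0 ≤ level x y := le_max_of_le_right hy

theorem point_param (hy : 0 ≤ y) : point (level x y) (param x y) = (x, y) := by
  simp only [point, level, param, abs_eq_max_neg, max_def, min_def, Prod.mk.injEq]
  constructor <;> split_ifs <;> linarith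

theorem abs_param_le (hy : 0 ≤ y) : |param x y| ≤ 2 * level x y := by
  simp only [level, param, abs_eq_max_neg, max_def, min_def]
  split_ifs <;> linarith

theorem param_zero : param x 0 = 2 * x := by
  simp only [param, max_def, min_def]
  split_ifs <;> linarith

theorem level_point (hr : |r| ≤ 2 * m) : level (point m r).1 (point m r).2 = m := by
  simp only [point, level, abs_eq_max_neg, max_def, min_def] at hr ⊢
  split_ifs at hr ⊢ <;> linarith

theorem point_mem (hr : |r| ≤ 2 * m) :
    |(point m r).1| ≤ m ∧ 0 ≤ (point m r).2 ∧ (point m r).2 ≤ m := by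
  simp only [point, abs_eq_max_neg, max_def, min_def] at hr ⊢
  split_ifs at hr ⊢ <;> refine ⟨?_, ?_, ?_⟩ <;> linarith

theorem point_two_mul (hm : 0 ≤ m) : point m (2 * m) = (m, 0) := by
  simp only [point, abs_of_nonneg (by linarith : 0 ≤ 2 * m), Prod.mk.injEq]
  constructor
  · rw [min_eq_left (by linarith), max_eq_right (by linarith)]
  · rw [sub_self, min_eq_right hm]

theorem abs_flow_param_le (ht₀ : 0 ≤ t) (ht₁ : t ≤ 1) (hy : 0 ≤ y) :
    |(1 - t) * param x y + t * (2 * level x y)| ≤ 2 * level x y := by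
  have := abs_param_le (x := x) hy
  rw [abs_le] at this ⊢
  constructor <;> nlinarith

theorem flow_zero (hy : 0 ≤ y) : flow 0 x y = (x, y) := by
  simpa [flow] using point_param hy

theorem flow_one (hy : 0 ≤ y) : flow 1 x y = (level x y, 0) := by
  simp only [flow, sub_self, zero_mul, zero_add, one_mul]
  exact point_two_mul (le_max_of_le_right hy)

theorem flow_of_nonneg (hx : 0 ≤ x) : flow t x 0 = (x, 0) := by
  have hl : level x 0 = x := by simp [level, abs_of_nonneg hx, hx]
  simp only [flow, param_zero, hl]
  simpa [← add_mul, ← mul_assoc, mul_comm 2 x] using point_two_mul hx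

theorem continuous_flow : Continuous fun q : ℝ × ℝ × ℝ => flow q.1 q.2.1 q.2.2 := by
  unfold flow point level param
  fun_prop

theorem level_flow (ht₀ : 0 ≤ t) (ht₁ : t ≤ 1) (hy : 0 ≤ y) :
    level (flow t x y).1 (flow t x y).2 = level x y :=
  level_point (abs_flow_param_le ht₀ ht₁ hy)

theorem flow_mem (ht₀ : 0 ≤ t) (ht₁ : t ≤ 1) (hy : 0 ≤ y) :
    |(flow t x y).1| ≤ level x y ∧ 0 ≤ (flow t x y).2 ∧ (flow t x y).2 ≤ level x y :=
  point_mem (abs_flow_param_le ht₀ ht₁ hy)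

end UShape

section Square

open UShape

noncomputable def squareLevel : C(I × I, I) where
  toFun p := ⟨level (2 * p.1 - 1) p.2, level_nonneg p.2.2.1,
    max_le (abs_le.2 ⟨by linarith [p.1.2.1], by linarith [p.1.2.2]⟩) p.2.2.2⟩
  continuous_toFun := by unfold level; fun_prop

theorem squareLevel_eq_one_iff {p : I × I} :
    squareLevel p = 1 ↔ p ∈ AttachTwoCell.collapsedEdges := by
  obtain ⟨⟨s, hs₀, hs₁⟩, ⟨u, hu₀, hu₁⟩⟩ := p
  simp only [squareLevel, AttachTwoCell.collapsedEdges, Set.mem_ofPred_eq, ContinuousMap.coe_mk,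
    ← Subtype.coe_inj, Set.Icc.coe_one, Set.Icc.coe_zero, level]
  rcases abs_cases (2 * s - 1) with ⟨h, _⟩ | ⟨h, _⟩ <;> rw [h, max_def] <;> split_ifs <;>
    grind

theorem squareLevel_lowerHalf (u : I) : squareLevel (lowerHalf u, 0) = σ u := by
  have hu : 0 ≤ 1 - (u : ℝ) := by linarith [u.2.2]
  ext
  change max |2 * ((u : ℝ) / 2) - 1| 0 = 1 - u
  rw [show 2 * ((u : ℝ) / 2) - 1 = -(1 - u) by ring, abs_neg, abs_of_nonneg hu, max_eq_left hu]

theorem squareLevel_upperHalf (u : I) : squareLevel (upperHalf u, 0) = u := by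
  ext
  change max |2 * (((u : ℝ) + 1) / 2) - 1| 0 = u
  rw [show 2 * (((u : ℝ) + 1) / 2) - 1 = u by ring, abs_of_nonneg u.2.1, max_eq_left u.2.1]

noncomputable def squareCollapse : C(I × (I × I), I × I) where
  toFun q :=
    have hflow := flow_mem (x := 2 * q.2.1 - 1) q.1.2.1 q.1.2.2 q.2.2.2.1
    have hlevel : level (2 * q.2.1 - 1) q.2.2 ≤ 1 := (squareLevel q.2).2.2
    (⟨((flow q.1 (2 * q.2.1 - 1) q.2.2).1 + 1) / 2,
        by constructor <;> linarith [abs_le.1 (hflow.1.trans hlevel)]⟩,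
      ⟨(flow q.1 (2 * q.2.1 - 1) q.2.2).2, hflow.2.1, hflow.2.2.trans hlevel⟩)
  continuous_toFun := by
    have hflow : Continuous fun q : I × (I × I) => flow q.1 (2 * q.2.1 - 1) q.2.2 :=
      continuous_flow.comp (by fun_prop :
        Continuous fun q : I × (I × I) => ((q.1 : ℝ), 2 * (q.2.1 : ℝ) - 1, (q.2.2 : ℝ)))
    exact (((continuous_fst.comp hflow).add continuous_const).div_const 2).subtype_mk _ |>.prodMk
      ((continuous_snd.comp hflow).subtype_mk _)

theorem squareCollapse_zero (p : I × I) : squareCollapse (0, p) = p := by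
  have h := flow_zero (x := 2 * p.1 - 1) p.2.2.1
  refine Prod.ext (Subtype.ext ?_) (Subtype.ext ?_)
  · change ((flow 0 (2 * p.1 - 1) p.2).1 + 1) / 2 = p.1
    rw [h]; ring
  · change (flow 0 (2 * p.1 - 1) p.2).2 = p.2
    rw [h]

theorem squareCollapse_one (p : I × I) :
    squareCollapse (1, p) = (upperHalf (squareLevel p), 0) := by
  have h := flow_one (x := 2 * p.1 - 1) p.2.2.1
  refine Prod.ext (Subtype.ext ?_) (Subtype.ext ?_)
  · change ((flow 1 (2 * p.1 - 1) p.2).1 + 1) / 2 = (level (2 * p.1 - 1) p.2 + 1) / 2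
    rw [h]
  · change (flow 1 (2 * p.1 - 1) p.2).2 = 0
    rw [h]

theorem squareLevel_squareCollapse (t : I) (p : I × I) :
    squareLevel (squareCollapse (t, p)) = squareLevel p := by
  ext
  change level (2 * (((flow t (2 * p.1 - 1) p.2).1 + 1) / 2) - 1) (flow t (2 * p.1 - 1) p.2).2 =
    level (2 * p.1 - 1) p.2
  rw [← level_flow t.2.1 t.2.2 p.2.2.1]
  ring_nf

theorem squareCollapse_upperHalf (t u : I) :
    squareCollapse (t, (upperHalf u, 0)) = (upperHalf u, 0) := by
  have h : flow t (2 * (((u : ℝ) + 1) / 2) - 1) 0 = ((u : ℝ), 0) := by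
    rw [show 2 * (((u : ℝ) + 1) / 2) - 1 = u by ring, flow_of_nonneg u.2.1]
  refine Prod.ext (Subtype.ext ?_) (Subtype.ext ?_)
  · change ((flow t (2 * (((u : ℝ) + 1) / 2) - 1) 0).1 + 1) / 2 = ((u : ℝ) + 1) / 2
    rw [h]
  · change (flow t (2 * (((u : ℝ) + 1) / 2) - 1) 0).2 = 0
    rw [h]

end Square

noncomputable section

namespace HandleCancellation

open AttachTwoCell

variable {W : Type} [TopologicalSpace W] {a b : W} (η : Path b a)

abbrev cancellingLoop : Path (inclOneCell W a b a) (inclOneCell W a b a) :=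
  (oneCellPath W a b).trans (η.map (inclOneCell W a b).continuous)

abbrev CellComplex : Type :=
  AttachTwoCell (AttachOneCell W a b) (inclOneCell W a b a) (cancellingLoop η)

def inclusion : C(W, CellComplex η) := (AttachTwoCell.incl _ _ _).comp (inclOneCell W a b)

def retraction : C(CellComplex η, W) :=
  lift (AttachOneCell.lift (.id W) η.symm) ((η : C(I, W)).comp squareLevel)
    (fun s => by
      obtain ⟨u, rfl⟩ | ⟨u, rfl⟩ := exists_eq_lowerHalf_or_upperHalf s
      · change η (squareLevel _) = _
        rw [squareLevel_lowerHalf, Path.trans_lowerHalf]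
        rfl
      · change η (squareLevel _) = _
        rw [squareLevel_upperHalf, Path.trans_upperHalf]
        rfl)
    (fun p hp => by
      change η (squareLevel _) = _
      rw [squareLevel_eq_one_iff.2 hp, η.target]
      rfl)

theorem retraction_comp_inclusion : (retraction η).comp (inclusion η) = .id W := rfl

theorem cell_upperHalf (u : I) :
    cell _ _ (cancellingLoop η) (upperHalf u, 0) = inclusion η (η u) := by
  rw [cell_bottom, Path.trans_upperHalf, Path.map_coe]
  rfl

theorem cell_of_squareLevel_eq_one {p : I × I} (hp : squareLevel p = 1) :
    cell _ _ (cancellingLoop η) p = inclusion η a :=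
  cell_of_mem_collapsedEdges (squareLevel_eq_one_iff.1 hp)

theorem cell_squareCollapse_one (p : I × I) :
    cell _ _ (cancellingLoop η) (squareCollapse (1, p)) =
      inclusion η (retraction η (cell _ _ _ p)) := by
  rw [squareCollapse_one, cell_upperHalf]
  rfl

def cellTracks : C(I × I, C(I, CellComplex η)) :=
  ((cell _ _ (cancellingLoop η)).comp (squareCollapse.comp prodSwap)).curry

theorem cellTracks_apply (p : I × I) (t : I) :
    cellTracks η p t = cell _ _ (cancellingLoop η) (squareCollapse (t, p)) := rfl

theorem cellTracks_of_squareLevel_eq_one {p : I × I} (hp : squareLevel p = 1) :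
    cellTracks η p = .const I (inclusion η a) := by
  ext t
  rw [cellTracks_apply, cell_of_squareLevel_eq_one η (by rw [squareLevel_squareCollapse, hp]),
    const_apply]

theorem cellTracks_upperHalf (u : I) :
    cellTracks η (upperHalf u, 0) = .const I (inclusion η (η u)) := by
  ext t
  rw [cellTracks_apply, squareCollapse_upperHalf, cell_upperHalf, const_apply]

def oneCellTracks : C(AttachOneCell W a b, C(I, CellComplex η)) :=
  AttachOneCell.lift (const'.comp (inclusion η))
    { toContinuousMap := (cellTracks η).comp ⟨fun u => (lowerHalf u, 0), by fun_prop⟩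
      source' := cellTracks_of_squareLevel_eq_one η <| (squareLevel_lowerHalf 0).trans symm_zero
      target' := by
        change cellTracks η (lowerHalf 1, 0) = _
        rw [lowerHalf_one, cellTracks_upperHalf, η.source]
        rfl }

def tracks : C(CellComplex η, C(I, CellComplex η)) :=
  lift (oneCellTracks η) (cellTracks η)
    (fun s => by
      obtain ⟨u, rfl⟩ | ⟨u, rfl⟩ := exists_eq_lowerHalf_or_upperHalf s
      · rw [Path.trans_lowerHalf]
        rfl
      · rw [Path.trans_upperHalf, Path.map_coe, Function.comp_apply, cellTracks_upperHalf]
        rfl)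
    (fun p hp => cellTracks_of_squareLevel_eq_one η (squareLevel_eq_one_iff.2 hp))

def deformation : Homotopy (.id (CellComplex η)) ((inclusion η).comp (retraction η)) :=
  .ofTracks (tracks η)
    (fun y => by
      induction y using AttachTwoCell.induction_on with
      | incl y =>
        induction y using AttachOneCell.induction_on with
        | incl w => rfl
        | cell u =>
          change cell _ _ _ (squareCollapse (0, (lowerHalf u, 0))) = _
          rw [squareCollapse_zero, cell_bottom, Path.trans_lowerHalf]
          rfl
      | cell p => exact congrArg (cell _ _ _) (squareCollapse_zero p))
    (fun y => by
      induction y using AttachTwoCell.induction_on with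
      | incl y =>
        induction y using AttachOneCell.induction_on with
        | incl w => rfl
        | cell u =>
          change cell _ _ _ (squareCollapse (1, (lowerHalf u, 0))) = _
          rw [cell_squareCollapse_one, cell_bottom, Path.trans_lowerHalf]
          rfl
      | cell p => exact cell_squareCollapse_one η p)

end HandleCancellation

end

/-- Handle cancellation, homotopy-theoretic version: attaching to `W` a 1-cell
with endpoints `a, b` and then a 2-cell along a loop that runs geometrically
once over the 1-cell (namely the core path of the 1-cell followed by the image
of a path `η` from `b` back to `a` inside `W`) yields a space homotopy
equivalent to `W` itself. -/
theorem handle_cancellation (W : Type) [TopologicalSpace W] (a b : W)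
    (η : Path b a) :
    Nonempty
      (ContinuousMap.HomotopyEquiv
        (AttachTwoCell (AttachOneCell W a b) (inclOneCell W a b a)
          ((oneCellPath W a b).trans (η.map (inclOneCell W a b).continuous)))
        W) :=
  ⟨{ toFun := HandleCancellation.retraction η
     invFun := HandleCancellation.inclusion η
     left_inv := ⟨(HandleCancellation.deformation η).symm⟩
     right_inv := HandleCancellation.retraction_comp_inclusion η ▸ .refl _ }⟩
end
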